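/- Each w = (σ,v) ∈ W(C̃_n) acts faithfully on ℝ^n by the affine map u ↦ u^σ + v. Let φ: ℝ^n → ℝ^n be the affine involution with φ(u)_i = 1/2 − u_{n+1−i} for each i. Then: (a) for every x ∈ W(C̃_n), the affine map φ∘x∘φ is the action of a unique element ω(x) ∈ W(C̃_n), and the resulting map ω is a group automorphism of W(C̃_n); (b) ω(W(B̃_n)) = B̄(B̃_n) and ω(B̄(B̃_n)) = W(B̃_n); (c) ω maps every involution of labelled cycle type (m, k_e, k_o, l) to an involution of labelled cycle type (m, k_o, k_e, l). -/

import Mathlib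

noncomputable section

open Equiv Finset

/-- Points `±1, …, ±n`, encoded as a sign together with an index. -/
abbrev Pt (n : ℕ) := ℤˣ × Fin n

/-- Negation of a point. -/
def negPt {n : ℕ} (x : Pt n) : Pt n := (-x.1, x.2)

/-- The hyperoctahedral group `H_n` of signed permutations: bijections `σ` of `{±1,…,±n}`
with `σ(-i) = -σ(i)`. -/
def Hgrp (n : ℕ) : Subgroup (Equiv.Perm (Pt n)) where
  carrier := {σ | ∀ x, σ (negPt x) = negPt (σ x)}
  one_mem' := fun _ => rfl
  mul_mem' := by
    intro σ τ hσ hτ x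
    have hσ' : ∀ y, σ (negPt y) = negPt (σ y) := hσ
    have hτ' : ∀ y, τ (negPt y) = negPt (τ y) := hτ
    simp only [Equiv.Perm.mul_apply]
    rw [hτ' x, hσ' (τ x)]
  inv_mem' := by
    intro σ hσ x
    have hσ' : ∀ y, σ (negPt y) = negPt (σ y) := hσ
    apply σ.injective
    rw [show ∀ y, σ (σ⁻¹ y) = y from fun y => σ.apply_symm_apply y, hσ',
      show ∀ y, σ (σ⁻¹ y) = y from fun y => σ.apply_symm_apply y]

lemma Hgrp_apply {n : ℕ} {σ : Equiv.Perm (Pt n)} (hσ : σ ∈ Hgrp n) (δ : ℤˣ) (k : Fin n) :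
    σ (δ, k) = (δ * (σ (1, k)).1, (σ (1, k)).2) := by
  have hσ' : ∀ y, σ (negPt y) = negPt (σ y) := hσ
  rcases Int.units_eq_one_or δ with h | h <;> subst h
  · simp
  · have h2 := hσ' (1, k)
    simp only [negPt] at h2
    simpa using h2

/-- The (right) action of a signed permutation on integer vectors:
`(v^σ)_j = ε·v_i` whenever `σ(i) = ε j`. -/
def actV {n : ℕ} (σ : Equiv.Perm (Pt n)) (v : Fin n → ℤ) : Fin n → ℤ :=
  fun j => ((σ (1, j)).1 : ℤ) * v (σ (1, j)).2

lemma actV_add {n : ℕ} (σ : Equiv.Perm (Pt n)) (a b : Fin n → ℤ) :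
    actV σ (a + b) = actV σ a + actV σ b := by
  funext j; simp [actV, mul_add]

lemma actV_zero {n : ℕ} (σ : Equiv.Perm (Pt n)) : actV σ 0 = 0 := by
  funext j; simp [actV]

lemma actV_neg {n : ℕ} (σ : Equiv.Perm (Pt n)) (v : Fin n → ℤ) :
    actV σ (-v) = -actV σ v := by
  funext j; simp [actV]

lemma actV_one {n : ℕ} (v : Fin n → ℤ) : actV 1 v = v := by
  funext j; simp [actV]

lemma actV_mul {n : ℕ} {σ : Equiv.Perm (Pt n)} (hσ : σ ∈ Hgrp n) (τ : Equiv.Perm (Pt n))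
    (v : Fin n → ℤ) : actV (σ * τ) v = actV τ (actV σ v) := by
  funext j
  have h := Hgrp_apply hσ (τ (1, j)).1 (τ (1, j)).2
  rw [Prod.mk.eta] at h
  simp only [actV, Equiv.Perm.mul_apply, h]
  push_cast
  ring

/-- The affine Weyl group of type `C̃ₙ`: pairs `(σ, v)` with `σ` a signed permutation and
`v ∈ ℤⁿ`, with multiplication `(σ,v)(τ,u) = (στ, v^τ + u)`. -/
@[ext] structure WC (n : ℕ) where
  sigma : Hgrp n
  vec : Fin n → ℤ

namespace WC

variable {n : ℕ}

instance : Mul (WC n) :=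
  ⟨fun x y => ⟨x.sigma * y.sigma, actV (y.sigma : Equiv.Perm (Pt n)) x.vec + y.vec⟩⟩

instance : One (WC n) := ⟨⟨1, 0⟩⟩

instance : Inv (WC n) :=
  ⟨fun x => ⟨x.sigma⁻¹, -actV ((x.sigma⁻¹ : Hgrp n) : Equiv.Perm (Pt n)) x.vec⟩⟩

@[simp] lemma mul_sigma (x y : WC n) : (x * y).sigma = x.sigma * y.sigma := rfl
@[simp] lemma mul_vec (x y : WC n) :
    (x * y).vec = actV (y.sigma : Equiv.Perm (Pt n)) x.vec + y.vec := rfl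
@[simp] lemma one_sigma : (1 : WC n).sigma = 1 := rfl
@[simp] lemma one_vec : (1 : WC n).vec = 0 := rfl
@[simp] lemma inv_sigma (x : WC n) : (x⁻¹).sigma = x.sigma⁻¹ := rfl
@[simp] lemma inv_vec (x : WC n) :
    (x⁻¹).vec = -actV ((x.sigma⁻¹ : Hgrp n) : Equiv.Perm (Pt n)) x.vec := rfl

instance : Group (WC n) where
  mul_assoc a b c := by
    refine WC.ext ?_ ?_
    · exact mul_assoc _ _ _
    · show actV (c.sigma : Equiv.Perm (Pt n))
          (actV (b.sigma : Equiv.Perm (Pt n)) a.vec + b.vec) + c.vec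
        = actV (((b.sigma * c.sigma : Hgrp n)) : Equiv.Perm (Pt n)) a.vec
          + (actV (c.sigma : Equiv.Perm (Pt n)) b.vec + c.vec)
      rw [actV_add]
      have hc : (((b.sigma * c.sigma : Hgrp n)) : Equiv.Perm (Pt n))
          = (b.sigma : Equiv.Perm (Pt n)) * (c.sigma : Equiv.Perm (Pt n)) := rfl
      rw [hc, actV_mul b.sigma.2]
      abel
  one_mul a := by
    refine WC.ext (one_mul _) ?_
    show actV (a.sigma : Equiv.Perm (Pt n)) 0 + a.vec = a.vec
    rw [actV_zero, zero_add]
  mul_one a := by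
    refine WC.ext (mul_one _) ?_
    show actV ((1 : Hgrp n) : Equiv.Perm (Pt n)) a.vec + 0 = a.vec
    have h1 : ((1 : Hgrp n) : Equiv.Perm (Pt n)) = 1 := rfl
    rw [h1, actV_one, add_zero]
  inv_mul_cancel a := by
    refine WC.ext (inv_mul_cancel _) ?_
    show actV (a.sigma : Equiv.Perm (Pt n))
        (-actV ((a.sigma⁻¹ : Hgrp n) : Equiv.Perm (Pt n)) a.vec) + a.vec = 0
    rw [actV_neg, ← actV_mul (a.sigma⁻¹ : Hgrp n).2]
    have h1 : ((a.sigma⁻¹ : Hgrp n) : Equiv.Perm (Pt n)) * (a.sigma : Equiv.Perm (Pt n)) = 1 := by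
      rw [← Subgroup.coe_mul, inv_mul_cancel, Subgroup.coe_one]
    rw [h1, actV_one, neg_add_cancel]

end WC

/-- `Σw`: the coordinate sum of the translation part. -/
def sumV {n : ℕ} (x : WC n) : ℤ := ∑ i, x.vec i

/-- `minus(w)`: the number of `i ∈ {1,…,n}` with `σ(i) < 0`. -/
def minusCard {n : ℕ} (x : WC n) : ℕ :=
  (Finset.univ.filter fun i : Fin n => ((x.sigma : Equiv.Perm (Pt n)) (1, i)).1 = -1).card
lemma permOf_bij {n : ℕ} (σ : Hgrp n) :
    Function.Bijective (fun i : Fin n => ((σ : Equiv.Perm (Pt n)) (1, i)).2) := by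
  rw [Fintype.bijective_iff_injective_and_card]
  refine ⟨?_, rfl⟩
  intro i j hij
  simp only at hij
  have hmem : ∀ y, (σ : Equiv.Perm (Pt n)) (negPt y) = negPt ((σ : Equiv.Perm (Pt n)) y) := σ.2
  by_cases h1 : ((σ : Equiv.Perm (Pt n)) (1, i)).1 = ((σ : Equiv.Perm (Pt n)) (1, j)).1
  · have heq : (σ : Equiv.Perm (Pt n)) (1, i) = (σ : Equiv.Perm (Pt n)) (1, j) :=
      Prod.ext h1 hij
    have h2 := (σ : Equiv.Perm (Pt n)).injective heq
    exact congrArg Prod.snd h2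
  · exfalso
    have hfst : ((σ : Equiv.Perm (Pt n)) (1, i)).1 = -((σ : Equiv.Perm (Pt n)) (1, j)).1 := by
      rcases Int.units_eq_one_or ((σ : Equiv.Perm (Pt n)) (1, i)).1 with ha | ha <;>
        rcases Int.units_eq_one_or ((σ : Equiv.Perm (Pt n)) (1, j)).1 with hb | hb <;>
        first
          | exact absurd (ha.trans hb.symm) h1
          | simp [ha, hb]
    have hne : (σ : Equiv.Perm (Pt n)) (1, i) = negPt ((σ : Equiv.Perm (Pt n)) (1, j)) :=
      Prod.ext hfst hij
    rw [← hmem (1, j)] at hne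
    have h3 := (σ : Equiv.Perm (Pt n)).injective hne
    have h4 := congrArg Prod.fst h3
    simp only [negPt] at h4
    exact absurd h4 (by decide)

/-- The underlying (unsigned) permutation of `{1,…,n}` induced by a signed permutation. -/
def permOf {n : ℕ} (σ : Hgrp n) : Equiv.Perm (Fin n) :=
  Equiv.ofBijective _ (permOf_bij σ)

@[simp] lemma permOf_apply {n : ℕ} (σ : Hgrp n) (i : Fin n) :
    permOf σ i = ((σ : Equiv.Perm (Pt n)) (1, i)).2 := rfl

lemma unitsCast_zmod2 (ε : ℤˣ) : (((ε : ℤ) : ZMod 2)) = 1 := by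
  rcases Int.units_eq_one_or ε with h | h <;> subst h <;> decide

lemma sumV_mul {n : ℕ} (x y : WC n) :
    ((sumV (x * y) : ℤ) : ZMod 2) = ((sumV x : ℤ) : ZMod 2) + ((sumV y : ℤ) : ZMod 2) := by
  have key : ∀ (σ : Hgrp n) (v : Fin n → ℤ),
      (∑ i, ((actV (σ : Equiv.Perm (Pt n)) v i : ℤ) : ZMod 2)) = ∑ i, ((v i : ℤ) : ZMod 2) := by
    intro σ v
    have hterm : ∀ i, ((actV (σ : Equiv.Perm (Pt n)) v i : ℤ) : ZMod 2)
        = ((v (permOf σ i) : ℤ) : ZMod 2) := by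
      intro i
      show ((((((σ : Equiv.Perm (Pt n)) (1, i)).1 : ℤ)) * v (((σ : Equiv.Perm (Pt n)) (1, i)).2) : ℤ) : ZMod 2) = _
      push_cast
      rw [unitsCast_zmod2, one_mul]
      rfl
    rw [Finset.sum_congr rfl (fun i _ => hterm i)]
    exact Equiv.sum_comp (permOf σ) (fun i => ((v i : ℤ) : ZMod 2))
  have hvec : (x * y).vec = actV (y.sigma : Equiv.Perm (Pt n)) x.vec + y.vec := rfl
  unfold sumV
  rw [hvec]
  have hsplit : (∑ i, (actV (y.sigma : Equiv.Perm (Pt n)) x.vec + y.vec) i)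
      = (∑ i, actV (y.sigma : Equiv.Perm (Pt n)) x.vec i) + ∑ i, y.vec i := by
    rw [← Finset.sum_add_distrib]; rfl
  rw [hsplit]
  push_cast
  rw [key y.sigma x.vec]

lemma minusCard_one {n : ℕ} : minusCard (1 : WC n) = 0 := by
  unfold minusCard
  rw [Finset.card_eq_zero, Finset.filter_eq_empty_iff]
  intro i _
  show ¬ (((1 : Hgrp n) : Equiv.Perm (Pt n)) (1, i)).1 = -1
  simp only [OneMemClass.coe_one, Equiv.Perm.one_apply]
  decide

lemma ite_units_mul (u w : ℤˣ) :
    ((if u * w = -1 then (1 : ZMod 2) else 0)) =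
      (if u = -1 then (1 : ZMod 2) else 0) + (if w = -1 then (1 : ZMod 2) else 0) := by
  rcases Int.units_eq_one_or u with h | h <;> rcases Int.units_eq_one_or w with h' | h' <;>
    subst h <;> subst h' <;> decide

lemma minusCard_mul {n : ℕ} (x y : WC n) :
    ((minusCard (x * y) : ℕ) : ZMod 2) = (minusCard x : ZMod 2) + (minusCard y : ZMod 2) := by
  have hσ : ∀ i : Fin n, ((x * y).sigma : Equiv.Perm (Pt n)) (1, i)
      = (x.sigma : Equiv.Perm (Pt n)) ((y.sigma : Equiv.Perm (Pt n)) (1, i)) := fun i => rfl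
  unfold minusCard
  rw [Finset.card_filter, Finset.card_filter, Finset.card_filter]
  push_cast
  have step : ∀ i : Fin n,
      ((if (((x * y).sigma : Equiv.Perm (Pt n)) (1, i)).1 = -1 then (1 : ZMod 2) else 0))
      = (if ((y.sigma : Equiv.Perm (Pt n)) (1, i)).1 = -1 then (1 : ZMod 2) else 0)
        + (if ((x.sigma : Equiv.Perm (Pt n)) (1, permOf y.sigma i)).1 = -1
            then (1 : ZMod 2) else 0) := by
    intro i
    rw [hσ i]
    have h := Hgrp_apply x.sigma.2 ((y.sigma : Equiv.Perm (Pt n)) (1, i)).1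
      ((y.sigma : Equiv.Perm (Pt n)) (1, i)).2
    rw [Prod.mk.eta] at h
    rw [h]
    exact ite_units_mul _ _
  calc (∑ i : Fin n, if (((x * y).sigma : Equiv.Perm (Pt n)) (1, i)).1 = -1
          then (1 : ZMod 2) else 0)
      = ∑ i : Fin n, ((if ((y.sigma : Equiv.Perm (Pt n)) (1, i)).1 = -1 then (1 : ZMod 2) else 0)
        + (if ((x.sigma : Equiv.Perm (Pt n)) (1, permOf y.sigma i)).1 = -1
            then (1 : ZMod 2) else 0)) := Finset.sum_congr rfl (fun i _ => step i)
    _ = (∑ i : Fin n, if ((y.sigma : Equiv.Perm (Pt n)) (1, i)).1 = -1 then (1 : ZMod 2) else 0)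
        + ∑ i : Fin n, (if ((x.sigma : Equiv.Perm (Pt n)) (1, permOf y.sigma i)).1 = -1
            then (1 : ZMod 2) else 0) := Finset.sum_add_distrib
    _ = (∑ i : Fin n, if ((x.sigma : Equiv.Perm (Pt n)) (1, i)).1 = -1 then (1 : ZMod 2) else 0)
        + ∑ i : Fin n, (if ((y.sigma : Equiv.Perm (Pt n)) (1, i)).1 = -1
            then (1 : ZMod 2) else 0) := by
          rw [add_comm]
          congr 1
          exact Equiv.sum_comp (permOf y.sigma)
            (fun k => if ((x.sigma : Equiv.Perm (Pt n)) (1, k)).1 = -1 then (1 : ZMod 2) else 0)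
lemma even_int_iff_zmod {a : ℤ} : Even a ↔ ((a : ZMod 2) = 0) := by
  rw [ZMod.intCast_zmod_eq_zero_iff_dvd a 2, Int.even_iff]
  push_cast
  omega

lemma sumV_one {n : ℕ} : sumV (1 : WC n) = 0 := by simp [sumV]

/-- The affine Weyl group of type `B̃ₙ`: the elements `w` of `W(C̃ₙ)` with `Σw` even. -/
def WB (n : ℕ) : Subgroup (WC n) where
  carrier := {w | Even (sumV w)}
  one_mem' := by
    show Even (sumV (1 : WC n))
    rw [sumV_one]
    exact Even.zero
  mul_mem' := by
    intro a b ha hb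
    have ha' : ((sumV a : ℤ) : ZMod 2) = 0 := even_int_iff_zmod.mp ha
    have hb' : ((sumV b : ℤ) : ZMod 2) = 0 := even_int_iff_zmod.mp hb
    refine even_int_iff_zmod.mpr ?_
    rw [sumV_mul, ha', hb', add_zero]
  inv_mem' := by
    intro a ha
    have ha' : ((sumV a : ℤ) : ZMod 2) = 0 := even_int_iff_zmod.mp ha
    refine even_int_iff_zmod.mpr ?_
    have h1 := sumV_mul a⁻¹ a
    rw [inv_mul_cancel, sumV_one, ha', add_zero] at h1
    simpa using h1.symm

lemma intModEq_two_iff {a b : ℤ} : a ≡ b [ZMOD 2] ↔ ((a : ZMod 2) = (b : ZMod 2)) :=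
  (ZMod.intCast_eq_intCast_iff a b 2).symm

/-- The second copy `B̄(B̃ₙ)` of the affine Weyl group of type `B̃ₙ` inside `W(C̃ₙ)`:
elements with `Σw ≡ minus(w) (mod 2)`. -/
def Bbar (n : ℕ) : Subgroup (WC n) where
  carrier := {w | sumV w ≡ (minusCard w : ℤ) [ZMOD 2]}
  one_mem' := by
    show sumV (1 : WC n) ≡ ((minusCard (1 : WC n) : ℤ)) [ZMOD 2]
    rw [sumV_one, minusCard_one]
    rfl
  mul_mem' := by
    intro a b ha hb
    have ha' := intModEq_two_iff.mp ha
    have hb' := intModEq_two_iff.mp hb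
    refine intModEq_two_iff.mpr ?_
    rw [sumV_mul, ha', hb']
    push_cast at ha' hb' ⊢
    rw [minusCard_mul]
  inv_mem' := by
    intro a ha
    have ha' := intModEq_two_iff.mp ha
    refine intModEq_two_iff.mpr ?_
    have h1 := sumV_mul a⁻¹ a
    have h2 := minusCard_mul a⁻¹ a
    rw [inv_mul_cancel, sumV_one] at h1
    rw [inv_mul_cancel, minusCard_one] at h2
    push_cast at ha' h1 h2 ⊢
    linear_combination h1.symm - h2.symm - ha'

/-- The affine Weyl group of type `D̃ₙ`, as the intersection of the two `B̃ₙ`'s. -/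
def WD (n : ℕ) : Subgroup (WC n) := WB n ⊓ Bbar n

instance : DecidablePred (fun k : ℤ => Even k) := fun _ => decidable_of_iff _ Int.even_iff.symm
instance : DecidablePred (fun k : ℤ => Odd k) := fun _ => decidable_of_iff _ Int.odd_iff.symm

/-- The labelled cycle type `(m, k_e, k_o, l)` of an element of `W(C̃ₙ)` (intended for
involutions): `m` is the number of 2-cycles of `σ`, `k_e` (resp. `k_o`) is the number of
`i` with `σ(i) = -i` whose label `v_i` is even (resp. odd), and `l` is the number of fixed
points of `σ`. -/
def lct {n : ℕ} (x : WC n) : ℕ × ℕ × ℕ × ℕ :=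
  ((Finset.univ.filter fun i : Fin n => ((x.sigma : Equiv.Perm (Pt n)) (1, i)).2 ≠ i).card / 2,
   (Finset.univ.filter fun i : Fin n =>
      (x.sigma : Equiv.Perm (Pt n)) (1, i) = (-1, i) ∧ Even (x.vec i)).card,
   (Finset.univ.filter fun i : Fin n =>
      (x.sigma : Equiv.Perm (Pt n)) (1, i) = (-1, i) ∧ Odd (x.vec i)).card,
   (Finset.univ.filter fun i : Fin n => (x.sigma : Equiv.Perm (Pt n)) (1, i) = (1, i)).card)

/-- `f(x)`: twice the sum of the labels over one chosen entry of each 2-cycle (we choose the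
entry with the smaller index), plus the sum of the labels over the negative 1-cycles.  Only
its residue modulo 4 is ever used, and for involutions that residue does not depend on the
choice of entries. -/
def fval {n : ℕ} (x : WC n) : ℤ :=
  2 * (∑ i ∈ Finset.univ.filter
        (fun i : Fin n => i < ((x.sigma : Equiv.Perm (Pt n)) (1, i)).2), x.vec i)
  + ∑ i ∈ Finset.univ.filter
      (fun i : Fin n => (x.sigma : Equiv.Perm (Pt n)) (1, i) = (-1, i)), x.vec i

/-- The commuting graph on a set `X` of elements of a group: vertices are the elements
of `X`, and distinct vertices are adjacent exactly when they commute.  When `X` is a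
conjugacy class of involutions this is the commuting involution graph `C(G,X)`. -/
def commGraph {M : Type*} [Group M] (X : Set M) : SimpleGraph X where
  Adj a b := a ≠ b ∧ (a : M) * (b : M) = (b : M) * (a : M)
  symm := ⟨fun a b h => ⟨h.1.symm, h.2.symm⟩⟩
  loopless := ⟨fun a h => h.1 rfl⟩

/-- The conjugacy class of `x` under conjugation by a subgroup `G`. -/
def ConjugacyClassOf {M : Type*} [Group M] (G : Subgroup M) (x : M) : Set M :=
  {y | ∃ g ∈ G, g⁻¹ * x * g = y}

/-- `X` is a conjugacy class of involutions of the subgroup `G`. -/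
def IsInvolutionConjClass {M : Type*} [Group M] (G : Subgroup M) (X : Set M) : Prop :=
  ∃ x ∈ G, orderOf x = 2 ∧ X = ConjugacyClassOf G x

/-- Sign change at the single coordinate `k`. -/
def negAt {n : ℕ} (k : Fin n) : Equiv.Perm (Pt n) :=
  Function.Involutive.toPerm (fun p => if p.2 = k then (-p.1, p.2) else p) (by
    intro p
    by_cases h : p.2 = k <;> simp [h, Prod.ext_iff])

lemma negAt_mem {n : ℕ} (k : Fin n) : negAt k ∈ Hgrp n := by
  intro p
  show (if (negPt p).2 = k then (-(negPt p).1, (negPt p).2) else negPt p)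
      = negPt (if p.2 = k then (-p.1, p.2) else p)
  by_cases h : p.2 = k <;> simp [negPt, h]

/-- The positive transposition of the coordinates `a` and `b`. -/
def swapPos {n : ℕ} (a b : Fin n) : Equiv.Perm (Pt n) :=
  Equiv.prodCongr (Equiv.refl ℤˣ) (Equiv.swap a b)

lemma swapPos_mem {n : ℕ} (a b : Fin n) : swapPos a b ∈ Hgrp n := fun _ => rfl

/-- The negative transposition of the coordinates `a` and `b` (for `a ≠ b` it sends
`a ↦ -b` and `b ↦ -a`). -/
def negSwap {n : ℕ} (a b : Fin n) : Equiv.Perm (Pt n) := negAt b * negAt a * swapPos a b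

lemma negSwap_mem {n : ℕ} (a b : Fin n) : negSwap a b ∈ Hgrp n :=
  mul_mem (mul_mem (negAt_mem b) (negAt_mem a)) (swapPos_mem a b)

/-- Constructor for elements of `W(C̃ₙ)`. -/
def mkW {n : ℕ} (σ : Equiv.Perm (Pt n)) (h : σ ∈ Hgrp n) (v : Fin n → ℤ) : WC n := ⟨⟨σ, h⟩, v⟩

/-- The simple reflection `r₁ = (σ, 0)` with `σ(1) = -1` (take `k = 0`); more generally
`(σ, 0)` with `σ(k) = -k`. -/
def rFirstGen (n : ℕ) (k : Fin n) : WC n := mkW (negAt k) (negAt_mem k) 0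

/-- The simple reflections `rᵢ = (σ, 0)`, `2 ≤ i ≤ n`, where `σ` exchanges `a` and `b`
positively (take `a, b` adjacent). -/
def swapGen (n : ℕ) (a b : Fin n) : WC n := mkW (swapPos a b) (swapPos_mem a b) 0

/-- The simple reflection `r_{n+1} = (σ, eₙ)` with `σ(n) = -n` (take `k = n-1`). -/
def rLastGen (n : ℕ) (k : Fin n) : WC n := mkW (negAt k) (negAt_mem k) (Pi.single k 1)

/-- The reflections `s = (σ, e_{n-1} + eₙ)` (take `a = n-2`, `b = n-1`) and
`t = (σ, e₁ + e₂)` (take `a = 0`, `b = 1`), where `σ(a) = -b`, `σ(b) = -a`. -/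
def negSwapGen (n : ℕ) (a b : Fin n) : WC n :=
  mkW (negSwap a b) (negSwap_mem a b) (Pi.single a 1 + Pi.single b 1)

/-- The projection `π : W(C̃ₙ) → Hₙ`, `(σ, v) ↦ σ`. -/
def projHom (n : ℕ) : WC n →* Equiv.Perm (Pt n) where
  toFun x := (x.sigma : Equiv.Perm (Pt n))
  map_one' := rfl
  map_mul' _ _ := rfl

/-- The action of a signed permutation on real vectors. -/
def actR {n : ℕ} (σ : Equiv.Perm (Pt n)) (u : Fin n → ℝ) : Fin n → ℝ :=
  fun j => (((σ (1, j)).1 : ℤ) : ℝ) * u (σ (1, j)).2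

/-- The affine action of `w = (σ,v) ∈ W(C̃ₙ)` on `ℝⁿ`: `u ↦ u^σ + v`. -/
def affAct {n : ℕ} (x : WC n) : (Fin n → ℝ) → (Fin n → ℝ) :=
  fun u => actR (x.sigma : Equiv.Perm (Pt n)) u + fun i => ((x.vec i : ℤ) : ℝ)

/-- The affine involution `φ` of `ℝⁿ` with `φ(u)ᵢ = 1/2 - u_{n+1-i}`. -/
def phiR (n : ℕ) : (Fin n → ℝ) → (Fin n → ℝ) := fun u i => 1 / 2 - u i.rev

/-!
Let `ρ` reverse the coordinates. Since `φ(u) = ½·𝟙 - u^ρ` and `𝟙^σ` is the sign vector `(ε_j)`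
of `σ`, one computes `φ ∘ (σ, v) ∘ φ = (ρσρ, χ - v^ρ)` with `χ_j = (1 - ε_{ρ j})/2 ∈ {0, 1}`.
As `φ` is an involution and the action is faithful, this defines an involutive automorphism `ω`.
It preserves `minus`, so `Σ ω(x) = minus(x) - Σ x` swaps the parity conditions defining
`W(B̃ₙ)` and `B̄(B̃ₙ)`; and at a fixed point `σ(i) = -i` the new label is `1 - v_i`, which swaps
`k_e` and `k_o`.
-/

section Omega

variable {n : ℕ}

lemma Hgrp_ext {σ τ : Equiv.Perm (Pt n)} (hσ : σ ∈ Hgrp n) (hτ : τ ∈ Hgrp n)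
    (h : ∀ j, σ (1, j) = τ (1, j)) : σ = τ := by
  ext1 ⟨δ, k⟩
  rw [Hgrp_apply hσ, Hgrp_apply hτ, h]

lemma apply_one_eq_of_actR_eq {σ τ : Equiv.Perm (Pt n)} (h : actR σ = actR τ) (j : Fin n) :
    σ (1, j) = τ (1, j) := by
  have hj := congrFun (congrFun h (Pi.single (σ (1, j)).2 1)) j
  simp only [actR, Pi.single_eq_same, mul_one] at hj
  by_cases hk : (τ (1, j)).2 = (σ (1, j)).2
  · rw [hk, Pi.single_eq_same, mul_one] at hj
    exact Prod.ext (Units.ext (by exact_mod_cast hj)) hk.symm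
  · rw [Pi.single_eq_of_ne hk, mul_zero] at hj
    exact absurd hj (Int.cast_ne_zero.mpr (Units.ne_zero _))

lemma affAct_zero (x : WC n) : affAct x 0 = fun i => (x.vec i : ℝ) := by
  funext i
  simp [affAct, actR]

lemma affAct_injective : Function.Injective (affAct (n := n)) := by
  intro x y h
  have hvec : x.vec = y.vec := by
    funext i
    have hi := congrFun (congrFun h 0) i
    simp only [affAct_zero] at hi
    exact_mod_cast hi
  have hact : actR (x.sigma : Equiv.Perm (Pt n)) = actR y.sigma := by
    funext u i
    simpa [affAct, hvec] using congrFun (congrFun h u) i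
  exact WC.ext (Subtype.ext (Hgrp_ext x.sigma.2 y.sigma.2 (apply_one_eq_of_actR_eq hact))) hvec

lemma affAct_mul (x y : WC n) : affAct (x * y) = affAct y ∘ affAct x := by
  funext u j
  have hσ : ((x.sigma * y.sigma : Hgrp n) : Equiv.Perm (Pt n)) (1, j)
      = (x.sigma : Equiv.Perm (Pt n)) ((y.sigma : Equiv.Perm (Pt n)) (1, j)) := rfl
  have hx := Hgrp_apply x.sigma.2 ((y.sigma : Equiv.Perm (Pt n)) (1, j)).1
    ((y.sigma : Equiv.Perm (Pt n)) (1, j)).2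
  rw [Prod.mk.eta] at hx
  simp only [affAct, Function.comp_apply, Pi.add_apply, WC.mul_sigma, WC.mul_vec, actR, actV,
    hσ, hx]
  push_cast
  ring

lemma phiR_involutive : Function.Involutive (phiR n) := by
  intro u
  funext i
  simp [phiR]

def revPt (n : ℕ) : Equiv.Perm (Pt n) := Equiv.prodCongr (Equiv.refl ℤˣ) Fin.revPerm

lemma revPt_mem : revPt n ∈ Hgrp n := fun _ => rfl

def omegaSigma (σ : Hgrp n) : Hgrp n :=
  ⟨revPt n * σ * revPt n, mul_mem (mul_mem revPt_mem σ.2) revPt_mem⟩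

lemma omegaSigma_apply (σ : Hgrp n) (j : Fin n) :
    (omegaSigma σ : Equiv.Perm (Pt n)) (1, j)
      = (((σ : Equiv.Perm (Pt n)) (1, j.rev)).1, ((σ : Equiv.Perm (Pt n)) (1, j.rev)).2.rev) :=
  rfl

def omegaMap (x : WC n) : WC n :=
  ⟨omegaSigma x.sigma,
    fun j => (if ((x.sigma : Equiv.Perm (Pt n)) (1, j.rev)).1 = -1 then 1 else 0) - x.vec j.rev⟩

lemma affAct_omegaMap (x : WC n) : affAct (omegaMap x) = phiR n ∘ affAct x ∘ phiR n := by
  funext u j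
  simp only [omegaMap, affAct, phiR, actR, omegaSigma_apply, Function.comp_apply,
    Pi.add_apply]
  rcases Int.units_eq_one_or ((x.sigma : Equiv.Perm (Pt n)) (1, j.rev)).1 with hε | hε <;>
    rw [hε] <;> norm_num <;> ring

lemma omegaMap_involutive : Function.Involutive (omegaMap (n := n)) := by
  intro x
  apply affAct_injective
  funext u
  simp [affAct_omegaMap, phiR_involutive _]

lemma omegaMap_mul (x y : WC n) : omegaMap (x * y) = omegaMap x * omegaMap y := by
  apply affAct_injective
  funext u
  simp [affAct_omegaMap, affAct_mul, phiR_involutive _]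

def omegaEquiv : WC n ≃* WC n :=
  { omegaMap_involutive.toPerm _ with map_mul' := omegaMap_mul }

@[simp] lemma omegaEquiv_apply (x : WC n) : omegaEquiv x = omegaMap x := rfl

lemma card_filter_eq_of_rev {P Q : Fin n → Prop} [DecidablePred P] [DecidablePred Q]
    (h : ∀ j, P j ↔ Q j.rev) : #(univ.filter P) = #(univ.filter Q) :=
  Finset.card_equiv Fin.revPerm (by simpa using h)

lemma minusCard_omegaMap (x : WC n) : minusCard (omegaMap x) = minusCard x :=
  card_filter_eq_of_rev fun j => by rw [omegaMap, omegaSigma_apply]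

lemma sumV_omegaMap (x : WC n) : sumV (omegaMap x) = minusCard x - sumV x := by
  simp only [sumV, omegaMap, minusCard, Finset.sum_sub_distrib, Finset.card_filter]
  push_cast
  congr 1
  · exact Equiv.sum_comp Fin.revPerm
      (fun i => if ((x.sigma : Equiv.Perm (Pt n)) (1, i)).1 = -1 then (1 : ℤ) else 0)
  · exact Equiv.sum_comp Fin.revPerm x.vec

lemma omegaMap_mem_WB_iff (x : WC n) : omegaMap x ∈ WB n ↔ x ∈ Bbar n := by
  change Even (sumV (omegaMap x)) ↔ sumV x ≡ minusCard x [ZMOD 2]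
  rw [sumV_omegaMap, Int.modEq_iff_dvd, even_iff_two_dvd]

lemma omegaMap_mem_Bbar_iff (x : WC n) : omegaMap x ∈ Bbar n ↔ x ∈ WB n := by
  change sumV (omegaMap x) ≡ minusCard (omegaMap x) [ZMOD 2] ↔ Even (sumV x)
  rw [sumV_omegaMap, minusCard_omegaMap, Int.modEq_iff_dvd, sub_sub_cancel, even_iff_two_dvd]

lemma map_WB_omegaEquiv : (WB n).map omegaEquiv.toMonoidHom = Bbar n := by
  ext x
  rw [Subgroup.mem_map_equiv]
  exact omegaMap_mem_WB_iff x

lemma map_Bbar_omegaEquiv : (Bbar n).map omegaEquiv.toMonoidHom = WB n := by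
  ext x
  rw [Subgroup.mem_map_equiv]
  exact omegaMap_mem_Bbar_iff x

lemma omegaMap_apply_eq_neg_iff (x : WC n) (j : Fin n) :
    ((omegaMap x).sigma : Equiv.Perm (Pt n)) (1, j) = (-1, j)
      ↔ (x.sigma : Equiv.Perm (Pt n)) (1, j.rev) = (-1, j.rev) := by
  rw [omegaMap, omegaSigma_apply, Prod.ext_iff, Prod.ext_iff, Fin.rev_eq_iff]

lemma omegaMap_vec_of_apply_eq_neg {x : WC n} {j : Fin n}
    (h : (x.sigma : Equiv.Perm (Pt n)) (1, j.rev) = (-1, j.rev)) :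
    (omegaMap x).vec j = 1 - x.vec j.rev := by
  simp [omegaMap, h]

lemma lct_omegaMap (x : WC n) :
    lct (omegaMap x) = ((lct x).1, (lct x).2.2.1, (lct x).2.1, (lct x).2.2.2) := by
  refine Prod.ext ?_ (Prod.ext ?_ (Prod.ext ?_ ?_))
  · exact congrArg (· / 2) <| card_filter_eq_of_rev fun j => by
      rw [omegaMap, omegaSigma_apply, ne_eq, Fin.rev_eq_iff]
  · refine card_filter_eq_of_rev fun j => ?_
    rw [omegaMap_apply_eq_neg_iff]
    refine and_congr_right fun h => ?_
    rw [omegaMap_vec_of_apply_eq_neg h, Int.even_sub, ← Int.not_even_iff_odd]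
    simp
  · refine card_filter_eq_of_rev fun j => ?_
    rw [omegaMap_apply_eq_neg_iff]
    refine and_congr_right fun h => ?_
    rw [omegaMap_vec_of_apply_eq_neg h, Int.odd_sub]
    simp
  · exact card_filter_eq_of_rev fun j => by
      rw [omegaMap, omegaSigma_apply, Prod.ext_iff, Prod.ext_iff, Fin.rev_eq_iff]

end Omega

theorem omega_automorphism_general (n : ℕ) :
    Function.Injective (affAct (n := n)) ∧
    ∃ ω : WC n ≃* WC n,
      (∀ x : WC n, affAct (ω x) = phiR n ∘ affAct x ∘ phiR n) ∧
      (∀ x y : WC n, affAct y = phiR n ∘ affAct x ∘ phiR n → y = ω x) ∧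
      ((WB n).map ω.toMonoidHom = Bbar n ∧ (Bbar n).map ω.toMonoidHom = WB n) ∧
      (∀ (x : WC n) (m ke ko l : ℕ), orderOf x = 2 → lct x = (m, ke, ko, l) →
        (orderOf (ω x) = 2 ∧ lct (ω x) = (m, ko, ke, l))) := by
  refine ⟨affAct_injective, omegaEquiv, affAct_omegaMap, fun x y h => ?_,
    ⟨map_WB_omegaEquiv, map_Bbar_omegaEquiv⟩, fun x m ke ko l hord hlct => ?_⟩
  · exact affAct_injective (h.trans (affAct_omegaMap x).symm)
  · exact ⟨(MulEquiv.orderOf_eq omegaEquiv x).trans hord,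
      by rw [omegaEquiv_apply, lct_omegaMap, hlct]⟩

theorem omega_automorphism (n : ℕ) (hn : 2 ≤ n) :
    Function.Injective (affAct (n := n)) ∧
    ∃ ω : WC n ≃* WC n,
      (∀ x : WC n, affAct (ω x) = phiR n ∘ affAct x ∘ phiR n) ∧
      (∀ x y : WC n, affAct y = phiR n ∘ affAct x ∘ phiR n → y = ω x) ∧
      ((WB n).map ω.toMonoidHom = Bbar n ∧ (Bbar n).map ω.toMonoidHom = WB n) ∧
      (∀ (x : WC n) (m ke ko l : ℕ), orderOf x = 2 → lct x = (m, ke, ko, l) →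
        (orderOf (ω x) = 2 ∧ lct (ω x) = (m, ko, ke, l))) :=
  omega_automorphism_general n
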